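/- arXiv:2107.06713 — 8 statements merged into one kernel-verified Lean document; each statement's English description precedes it below -/
import Mathlib

section
/- For nonnegative ξ ∈ ℝⁿ and non-decreasing nonnegative weights λ ∈ ℝⁿ, the ordered weighted sum ∑ᵢ λᵢ ξ₍ᵢ₎ equals the optimal value of the assignment linear program: max ∑ᵢ∑ⱼ λⱼ ξᵢ z_{ij} over z ≥ 0 satisfying ∑ᵢ z_{ij} = 1 for all j and ∑ⱼ z_{ij} = 1 for all i (i.e., the maximum over doubly stochastic matrices). -/
/-- OWA equals the optimal value of the assignment LP over doubly stochastic matrices. -/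
theorem owa_eq_max_doubly_stochastic (n : ℕ) (hn : 1 ≤ n)
    (ξ lam : Fin n → ℝ) (hξ : ∀ i, 0 ≤ ξ i) (hlam0 : ∀ i, 0 ≤ lam i)
    (hlam : Monotone lam) :
    IsGreatest {s : ℝ | ∃ z : Fin n → Fin n → ℝ,
        (∀ i j, 0 ≤ z i j) ∧ (∀ j, ∑ i, z i j = 1) ∧ (∀ i, ∑ j, z i j = 1) ∧
        s = ∑ i, ∑ j, lam j * ξ i * z i j}
      (∑ i, lam i * (ξ ∘ Tuple.sort ξ) i) := by
  set τ := Tuple.sort ξ with hτ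
  have hmono : Monotone (ξ ∘ τ) := Tuple.monotone_sort ξ
  have hmv : Monovary lam (ξ ∘ τ) := by
    intro i j hij
    rcases le_total i j with h | h
    · exact hlam h
    · exact absurd (hmono h) (not_le.2 hij)
  constructor
  · -- membership: permutation matrix of τ
    refine ⟨fun i j => if i = τ j then 1 else 0, ?_, ?_, ?_, ?_⟩
    · intro i j; dsimp only; split <;> norm_num
    · intro j; simp
    · intro i
      dsimp only
      rw [Finset.sum_eq_single (τ.symm i)]
      · simp
      · intro j _ hj
        rw [if_neg]
        intro hc
        exact hj (by rw [hc]; simp)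
      · simp
    · rw [Finset.sum_comm]
      refine Finset.sum_congr rfl fun j _ => ?_
      dsimp only
      rw [Finset.sum_eq_single (τ j)]
      · simp [mul_comm]
      · intro i _ hi
        rw [if_neg hi, mul_zero]
      · simp
  · -- upper bound
    rintro s ⟨z, hpos, hcol, hrow, rfl⟩
    set M : Matrix (Fin n) (Fin n) ℝ := Matrix.of z with hM
    have hMds : M ∈ doublyStochastic ℝ (Fin n) := by
      rw [mem_doublyStochastic_iff_sum]
      exact ⟨fun i j => hpos i j, fun i => hrow i, fun j => hcol j⟩
    obtain ⟨w, hw0, hw1, hwM⟩ := exists_eq_sum_perm_of_mem_doublyStochastic hMds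
    have key : ∀ σ : Equiv.Perm (Fin n),
        ∑ i, ∑ j, lam j * ξ i * (σ.permMatrix ℝ) i j
          ≤ ∑ i, lam i * (ξ ∘ τ) i := by
      intro σ
      have h1 : ∑ i, ∑ j, lam j * ξ i * (σ.permMatrix ℝ) i j = ∑ i, lam (σ i) * ξ i := by
        refine Finset.sum_congr rfl fun i _ => ?_
        rw [Finset.sum_eq_single (σ i)]
        · simp [Equiv.Perm.permMatrix, PEquiv.toMatrix, Equiv.toPEquiv]
        · intro j _ hj
          simp [Equiv.Perm.permMatrix, PEquiv.toMatrix, Equiv.toPEquiv, Ne.symm hj]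
        · simp
      rw [h1]
      have h2 : ∑ i, lam (σ i) * ξ i = ∑ i, lam ((τ.trans σ) i) * (ξ ∘ τ) i := by
        rw [← Equiv.sum_comp τ (fun i => lam (σ i) * ξ i)]
        rfl
      rw [h2]
      exact hmv.sum_comp_perm_mul_le_sum_mul
    have hz : ∀ i j, z i j = ∑ σ : Equiv.Perm (Fin n), w σ * (σ.permMatrix ℝ) i j := by
      intro i j
      calc z i j = M i j := rfl
        _ = (∑ σ : Equiv.Perm (Fin n), w σ • σ.permMatrix ℝ) i j := by rw [hwM]
        _ = ∑ σ : Equiv.Perm (Fin n), w σ * (σ.permMatrix ℝ) i j := by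
            simp [Matrix.sum_apply]
    calc ∑ i, ∑ j, lam j * ξ i * z i j
        = ∑ σ : Equiv.Perm (Fin n), w σ * ∑ i, ∑ j, lam j * ξ i * (σ.permMatrix ℝ) i j := by
          simp_rw [hz, Finset.mul_sum, Finset.sum_comm (γ := Equiv.Perm (Fin n))]
          refine Finset.sum_congr rfl fun σ _ => ?_
          refine Finset.sum_congr rfl fun i _ => ?_
          refine Finset.sum_congr rfl fun j _ => ?_
          ring
      _ ≤ ∑ σ : Equiv.Perm (Fin n), w σ * ∑ i, lam i * (ξ ∘ τ) i := by
          refine Finset.sum_le_sum fun σ _ => mul_le_mul_of_nonneg_left (key σ) (hw0 σ)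
      _ = ∑ i, lam i * (ξ ∘ τ) i := by rw [← Finset.sum_mul, hw1, one_mul]
end

section
/- For any ξ ∈ ℝⁿ, weights λ with 0 ≤ λ₁ ≤ ... ≤ λₙ, and constant C > 0, the ordered weighted sum C·∑ⱼ λⱼ ξ₍ⱼ₎ equals the optimal value of the linear program: minimize ∑ᵢ uᵢ + ∑ⱼ vⱼ over u, v ∈ ℝⁿ subject to uᵢ + vⱼ ≥ C λⱼ ξᵢ for all i, j. -/
/-- C·OWA equals the optimal value of the dual LP: minimize ∑u + ∑v subject to
uᵢ + vⱼ ≥ C λⱼ ξᵢ. -/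
theorem owa_eq_dual_lp (n : ℕ) (hn : 1 ≤ n) (C : ℝ) (hC : 0 < C)
    (ξ lam : Fin n → ℝ) (hξ : ∀ i, 0 ≤ ξ i) (hlam0 : ∀ i, 0 ≤ lam i)
    (hlam : Monotone lam) :
    IsLeast {s : ℝ | ∃ u v : Fin n → ℝ,
        (∀ i j, C * lam j * ξ i ≤ u i + v j) ∧ s = (∑ i, u i) + ∑ j, v j}
      (C * ∑ j, lam j * (ξ ∘ Tuple.sort ξ) j) := by
  classical
  set σ := Tuple.sort ξ with hσ
  have hmono : Monotone (ξ ∘ σ) := Tuple.monotone_sort ξ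
  set X : ℕ → ℝ := fun t => if h : t < n then ξ (σ ⟨t, h⟩) else 0 with hX
  set L : ℕ → ℝ := fun t => if h : t < n then lam ⟨t, h⟩ else 0 with hL
  set U : ℕ → ℝ := fun k => C * ∑ t ∈ Finset.range k, L (t + 1) * (X (t + 1) - X t)
    with hU
  have hXval : ∀ (k : Fin n), X k.val = ξ (σ k) := by
    intro k; simp [hX, k.isLt]
  have hLval : ∀ (k : Fin n), L k.val = lam k := by
    intro k; simp [hL, k.isLt]
  have hXmono : ∀ a b : ℕ, a ≤ b → b < n → X a ≤ X b := by
    intro a b hab hb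
    have ha : a < n := lt_of_le_of_lt hab hb
    have := hmono (a := ⟨a, ha⟩) (b := ⟨b, hb⟩) hab
    simpa [hX, ha, hb] using this
  have hLmono : ∀ a b : ℕ, a ≤ b → b < n → L a ≤ L b := by
    intro a b hab hb
    have ha : a < n := lt_of_le_of_lt hab hb
    have := hlam (a := ⟨a, ha⟩) (b := ⟨b, hb⟩) hab
    simpa [hL, ha, hb] using this
  -- telescoping over Ico
  have htel : ∀ j k : ℕ, j ≤ k →
      ∑ t ∈ Finset.Ico j k, (X (t + 1) - X t) = X k - X j := by
    intro j k hjk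
    have h1 := Finset.sum_range_add_sum_Ico (fun t => X (t + 1) - X t) hjk
    have h2 := Finset.sum_range_sub X k
    have h3 := Finset.sum_range_sub X j
    linarith [h1, h2, h3]
  -- key inequality
  have key : ∀ j k : ℕ, j < n → k < n → C * L j * (X k - X j) ≤ U k - U j := by
    intro j k hjn hkn
    rcases le_total j k with hjk | hkj
    · have hsplit := Finset.sum_range_add_sum_Ico
        (fun t => L (t + 1) * (X (t + 1) - X t)) hjk
      have hdiff : U k - U j = C * ∑ t ∈ Finset.Ico j k, L (t + 1) * (X (t + 1) - X t) := by
        simp only [hU]; rw [← hsplit]; ring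
      have hterm : ∀ t ∈ Finset.Ico j k,
          L j * (X (t + 1) - X t) ≤ L (t + 1) * (X (t + 1) - X t) := by
        intro t ht
        rw [Finset.mem_Ico] at ht
        have h1 : t + 1 < n := lt_of_le_of_lt ht.2 hkn
        have hXd : 0 ≤ X (t + 1) - X t := by
          have := hXmono t (t + 1) (Nat.le_succ t) h1; linarith
        have hLd : L j ≤ L (t + 1) := hLmono j (t + 1) (le_trans ht.1 (Nat.le_succ t)) h1
        nlinarith
      have hsum := Finset.sum_le_sum hterm
      have : L j * (X k - X j) ≤ ∑ t ∈ Finset.Ico j k, L (t + 1) * (X (t + 1) - X t) := by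
        calc L j * (X k - X j) = ∑ t ∈ Finset.Ico j k, L j * (X (t + 1) - X t) := by
              rw [← Finset.mul_sum, htel j k hjk]
          _ ≤ _ := hsum
      rw [hdiff]; nlinarith
    · have hsplit := Finset.sum_range_add_sum_Ico
        (fun t => L (t + 1) * (X (t + 1) - X t)) hkj
      have hdiff : U j - U k = C * ∑ t ∈ Finset.Ico k j, L (t + 1) * (X (t + 1) - X t) := by
        simp only [hU]; rw [← hsplit]; ring
      have hterm : ∀ t ∈ Finset.Ico k j,
          L (t + 1) * (X (t + 1) - X t) ≤ L j * (X (t + 1) - X t) := by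
        intro t ht
        rw [Finset.mem_Ico] at ht
        have h1 : t + 1 < n := lt_of_le_of_lt ht.2 hjn
        have hXd : 0 ≤ X (t + 1) - X t := by
          have := hXmono t (t + 1) (Nat.le_succ t) h1; linarith
        have hLd : L (t + 1) ≤ L j := hLmono (t + 1) j ht.2 hjn
        nlinarith
      have hsum := Finset.sum_le_sum hterm
      have : ∑ t ∈ Finset.Ico k j, L (t + 1) * (X (t + 1) - X t) ≤ L j * (X j - X k) := by
        calc ∑ t ∈ Finset.Ico k j, L (t + 1) * (X (t + 1) - X t)
            ≤ ∑ t ∈ Finset.Ico k j, L j * (X (t + 1) - X t) := hsum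
          _ = L j * (X j - X k) := by rw [← Finset.mul_sum, htel k j hkj]
      rw [show C * L j * (X k - X j) = -(C * (L j * (X j - X k))) by ring]
      nlinarith
  constructor
  · -- membership: construct optimal u, v
    refine ⟨fun i => U ((σ.symm i : Fin n) : ℕ),
      fun j => C * lam j * ξ (σ j) - U (j : ℕ), ?_, ?_⟩
    · intro i j
      have hk := key (j : ℕ) ((σ.symm i : Fin n) : ℕ) j.isLt (σ.symm i).isLt
      have h1 : X ((σ.symm i : Fin n) : ℕ) = ξ i := by
        rw [hXval (σ.symm i)]; simp
      have h2 : X (j : ℕ) = ξ (σ j) := hXval j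
      have h3 : L (j : ℕ) = lam j := hLval j
      rw [h1, h2, h3] at hk
      dsimp only
      linarith
    · have hs : ∑ i, U ((σ.symm i : Fin n) : ℕ) = ∑ j, U ((j : Fin n) : ℕ) :=
        Equiv.sum_comp σ.symm (fun j => U ((j : Fin n) : ℕ))
      rw [hs, Finset.sum_sub_distrib, Finset.mul_sum]
      simp only [Function.comp_apply, mul_assoc]
      linarith
  · -- lower bound
    rintro s ⟨u, v, hfeas, rfl⟩
    have hu : ∑ i, u i = ∑ k, u (σ k) := (Equiv.sum_comp σ u).symm
    rw [hu, Finset.mul_sum, ← Finset.sum_add_distrib]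
    apply Finset.sum_le_sum
    intro k _
    have := hfeas (σ k) k
    simp only [Function.comp]
    linarith
end

section
/- For nonnegative ξ ∈ ℝⁿ, the sum of the k largest entries of ξ equals the minimum over t ∈ ℝ of k·t + ∑_{i=1}^n max(ξᵢ − t, 0). -/
/-- The sum of the k largest entries of a nonnegative vector ξ equals
min over t of k·t + ∑ max(ξᵢ − t, 0), attained at t = ξ₍ₙ₋ₖ₊₁₎. -/
theorem sum_k_largest_eq_min (n k : ℕ) (hk1 : 1 ≤ k) (hkn : k ≤ n)
    (ξ : Fin n → ℝ) (hξ : ∀ i, 0 ≤ ξ i) :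
    IsLeast {s : ℝ | ∃ t : ℝ, s = (k : ℝ) * t + ∑ i, max (ξ i - t) 0}
        (∑ j, if n - k ≤ (j : Fin n).val then (ξ ∘ Tuple.sort ξ) j else 0) ∧
      (∑ j, if n - k ≤ (j : Fin n).val then (ξ ∘ Tuple.sort ξ) j else 0)
        = (k : ℝ) * (ξ ∘ Tuple.sort ξ) ⟨n - k, by omega⟩
          + ∑ i, max (ξ i - (ξ ∘ Tuple.sort ξ) ⟨n - k, by omega⟩) 0 := by
  set η : Fin n → ℝ := ξ ∘ Tuple.sort ξ with hη
  have hmono : Monotone η := Tuple.monotone_sort ξ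
  have hlt : n - k < n := by omega
  set i0 : Fin n := ⟨n - k, hlt⟩ with hi0
  set t0 : ℝ := η i0 with ht0
  -- permutation sums
  have hperm : ∀ t : ℝ, ∑ i, max (ξ i - t) 0 = ∑ j, max (η j - t) 0 := by
    intro t
    exact (Equiv.sum_comp (Tuple.sort ξ) (fun i => max (ξ i - t) 0)).symm
  -- filter = Ici
  have hfilt : (Finset.univ.filter (fun j : Fin n => n - k ≤ j.val)) = Finset.Ici i0 := by
    ext j
    simp [Fin.le_def, hi0]
  have hcard : (Finset.univ.filter (fun j : Fin n => n - k ≤ j.val)).card = k := by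
    rw [hfilt, Fin.card_Ici]
    simp [hi0]
    omega
  -- second conjunct
  have hEq : (∑ j, if n - k ≤ (j : Fin n).val then η j else 0)
      = (k : ℝ) * t0 + ∑ i, max (ξ i - t0) 0 := by
    rw [hperm t0]
    have h1 : ∀ j : Fin n, max (η j - t0) 0 = if n - k ≤ j.val then η j - t0 else 0 := by
      intro j
      by_cases h : n - k ≤ j.val
      · rw [if_pos h, max_eq_left]
        have : i0 ≤ j := by simpa [Fin.le_def, hi0] using h
        linarith [hmono this]
      · rw [if_neg h, max_eq_right]
        have : j ≤ i0 := by simp [Fin.le_def, hi0]; omega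
        linarith [hmono this]
    simp only [h1]
    have : ∀ j : Fin n, (if n - k ≤ j.val then η j - t0 else 0)
        = (if n - k ≤ j.val then η j else 0) - (if n - k ≤ j.val then t0 else 0) := by
      intro j; by_cases h : n - k ≤ j.val <;> simp [h]
    simp only [this, Finset.sum_sub_distrib]
    rw [← Finset.sum_filter (fun j : Fin n => n - k ≤ j.val) (fun _ => t0),
      Finset.sum_const, hcard]
    ring
  refine ⟨⟨⟨t0, hEq⟩, ?_⟩, hEq⟩
  rintro s ⟨t, rfl⟩
  rw [hperm t]
  have h2 : ∀ j : Fin n, (if n - k ≤ j.val then η j else 0)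
      ≤ (if n - k ≤ j.val then max (η j - t) 0 + t else 0) := by
    intro j
    by_cases h : n - k ≤ j.val
    · simp only [if_pos h]
      have := le_max_left (η j - t) (0:ℝ); linarith
    · simp [h]
  calc (∑ j, if n - k ≤ (j : Fin n).val then η j else 0)
      ≤ ∑ j, if n - k ≤ (j : Fin n).val then max (η j - t) 0 + t else 0 :=
        Finset.sum_le_sum (fun j _ => h2 j)
    _ = (∑ j, if n - k ≤ (j : Fin n).val then max (η j - t) 0 else 0) + (k : ℝ) * t := by
        have : ∀ j : Fin n, (if n - k ≤ j.val then max (η j - t) 0 + t else 0)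
            = (if n - k ≤ j.val then max (η j - t) 0 else 0) + (if n - k ≤ j.val then t else 0) := by
          intro j; by_cases h : n - k ≤ j.val <;> simp [h]
        simp only [this, Finset.sum_add_distrib]
        rw [← Finset.sum_filter (fun j : Fin n => n - k ≤ j.val) (fun _ => t),
          Finset.sum_const, hcard]
        ring
    _ ≤ (∑ j, max (η j - t) 0) + (k : ℝ) * t := by
        gcongr with j _
        by_cases h : n - k ≤ j.val <;> simp [h, le_max_iff]
    _ = (k : ℝ) * t + ∑ j, max (η j - t) 0 := by ring
end

section
/- If some weights are strictly decreasing (there exist indices i < j with λᵢ > λⱼ and all λ ≥ 0), then the ordered weighted sum functional ξ ↦ ∑ᵢ λᵢ ξ₍ᵢ₎ on ℝⁿ is not convex. -/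
lemma owa_exists_adj {n : ℕ} (lam : Fin n → ℝ) (i j : Fin n) (hij : i < j)
    (hdec : lam j < lam i) :
    ∃ m : ℕ, ∃ h : m + 1 < n, lam ⟨m + 1, h⟩ < lam ⟨m, Nat.lt_of_succ_lt h⟩ := by
  by_contra hc
  push_neg at hc
  have step : ∀ d a (h : a + d < n), lam ⟨a, by omega⟩ ≤ lam ⟨a + d, h⟩ := by
    intro d
    induction d with
    | zero => intro a h; exact le_refl _
    | succ d ih =>
      intro a h
      have h1 : a + d + 1 < n := by omega
      have h2 := ih a (by omega)
      have e : (⟨a + (d+1), h⟩ : Fin n) = ⟨(a+d)+1, h1⟩ := by simp only [Fin.mk.injEq]; omega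
      rw [e]
      exact le_trans h2 (hc (a + d) h1)
  have hij' : (i : ℕ) < (j : ℕ) := hij
  have h2 := step ((j : ℕ) - (i : ℕ)) (i : ℕ) (by omega)
  have e1 : (⟨(i:ℕ), by omega⟩ : Fin n) = i := by ext; rfl
  have e2 : (⟨(i:ℕ) + ((j:ℕ) - (i:ℕ)), by omega⟩ : Fin n) = j := by ext; simp; omega
  rw [e1, e2] at h2
  linarith

/-- If the weights are somewhere strictly decreasing, the OWA functional is not convex. -/
theorem owa_not_convexOn (n : ℕ) (hn : 2 ≤ n)
    (lam : Fin n → ℝ) (hlam0 : ∀ k, 0 ≤ lam k)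
    (i j : Fin n) (hij : i < j) (hdec : lam j < lam i) :
    ¬ ConvexOn ℝ Set.univ (fun ξ : Fin n → ℝ => ∑ k, lam k * (ξ ∘ Tuple.sort ξ) k) := by
  obtain ⟨m, hm, hdec'⟩ := owa_exists_adj lam i j hij hdec
  set p : Fin n := ⟨m, Nat.lt_of_succ_lt hm⟩ with hp
  set q : Fin n := ⟨m + 1, hm⟩ with hq
  have hpq : p ≠ q := by simp [hp, hq, Fin.ext_iff]
  set y : Fin n → ℝ := fun k => if (k : ℕ) ≤ m then 0 else 1 with hy
  set x : Fin n → ℝ := y ∘ (Equiv.swap p q) with hx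
  set z : Fin n → ℝ := fun k => if (k : ℕ) < m then 0 else if (k : ℕ) ≤ m + 1 then 1/2 else 1 with hz
  have hymono : Monotone y := by
    intro a b hab
    have hab' : (a : ℕ) ≤ (b : ℕ) := hab
    simp only [hy]
    split_ifs <;> first | (exfalso; omega) | norm_num
  have hzmono : Monotone z := by
    intro a b hab
    have hab' : (a : ℕ) ≤ (b : ℕ) := hab
    simp only [hz]
    split_ifs <;> first | (exfalso; omega) | norm_num
  have hyp : y p = 0 := by simp [hy, hp]
  have hyq : y q = 1 := by simp [hy, hq]
  have hzp : z p = 1/2 := by simp [hz, hp]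
  have hzq : z q = 1/2 := by simp [hz, hq]
  have hyz : ∀ k : Fin n, k ≠ p → k ≠ q → z k = y k := by
    intro k hkp hkq
    have h1 : (k : ℕ) ≠ m := fun h => hkp (by ext; exact h)
    have h2 : (k : ℕ) ≠ m + 1 := fun h => hkq (by ext; exact h)
    simp only [hy, hz]
    split_ifs <;> first | rfl | omega
  have hmid : (1/2 : ℝ) • x + (1/2 : ℝ) • y = z := by
    funext k
    simp only [Pi.add_apply, Pi.smul_apply, smul_eq_mul, hx, Function.comp_apply]
    rcases eq_or_ne k p with rfl | hkp
    · rw [Equiv.swap_apply_left, hyq, hyp, hzp]; norm_num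
    · rcases eq_or_ne k q with rfl | hkq
      · rw [Equiv.swap_apply_right, hyp, hyq, hzq]; norm_num
      · rw [Equiv.swap_apply_of_ne_of_ne hkp hkq, hyz k hkp hkq]; ring
  intro hconv
  have key := hconv.2 (Set.mem_univ x) (Set.mem_univ y)
    (by norm_num : (0:ℝ) ≤ 1/2) (by norm_num : (0:ℝ) ≤ 1/2) (by norm_num : (1/2 : ℝ) + 1/2 = 1)
  rw [hmid] at key
  have hysort : y ∘ Tuple.sort y = y := by
    rw [Tuple.sort_eq_refl_iff_monotone.mpr hymono]; rfl
  have hzsort : z ∘ Tuple.sort z = z := by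
    rw [Tuple.sort_eq_refl_iff_monotone.mpr hzmono]; rfl
  have hxsort : x ∘ Tuple.sort x = y := by
    rw [hx, Tuple.comp_perm_comp_sort_eq_comp_sort, hysort]
  simp only [hysort, hzsort, hxsort, smul_eq_mul] at key
  have hsub : ∑ k, (lam k * z k - lam k * y k)
      = (lam p * z p - lam p * y p) + (lam q * z q - lam q * y q) := by
    rw [← Finset.sum_subset (Finset.subset_univ ({p, q} : Finset (Fin n)))
      (by
        intro k _ hk
        simp only [Finset.mem_insert, Finset.mem_singleton, not_or] at hk
        rw [hyz k hk.1 hk.2]; ring)]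
    rw [Finset.sum_pair hpq]
  rw [Finset.sum_sub_distrib] at hsub
  rw [hzp, hzq, hyp, hyq] at hsub
  have hlt : lam q < lam p := hdec'
  linarith
end

section
/- For nonnegative ξ ∈ ℝⁿ and general nonnegative weights λ ∈ ℝⁿ, the ordered weighted sum ∑ₖ λₖ ξ₍ₖ₎ equals the optimal value of the mixed-integer program: minimize ∑ₖ λₖ θₖ over permutation matrices z ∈ {0,1}^{n×n} and θ ∈ ℝⁿ with θₖ ≥ 0, subject to θₖ ≥ ξᵢ − M(1 − ∑_{j ≤ k} z_{ij}) for all i, k, whenever M ≥ maxᵢ ξᵢ. -/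
open Finset

/-- OWA with general nonnegative weights equals the optimal value of the big-M
mixed-integer program over permutation matrices z and variables θ. -/
theorem owa_eq_min_bigM (n : ℕ) (hn : 1 ≤ n) (M : ℝ)
    (ξ lam : Fin n → ℝ) (hξ : ∀ i, 0 ≤ ξ i) (hξM : ∀ i, ξ i ≤ M)
    (hlam : ∀ k, 0 ≤ lam k) :
    IsLeast {s : ℝ | ∃ z : Fin n → Fin n → ℝ, ∃ θ : Fin n → ℝ,
        (∀ i j, z i j = 0 ∨ z i j = 1) ∧
        (∀ j, ∑ i, z i j = 1) ∧ (∀ i, ∑ j, z i j = 1) ∧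
        (∀ k, 0 ≤ θ k) ∧
        (∀ i k, ξ i - M * (1 - ∑ j ∈ Finset.univ.filter (fun j => j ≤ k), z i j) ≤ θ k) ∧
        s = ∑ k, lam k * θ k}
      (∑ k, lam k * (ξ ∘ Tuple.sort ξ) k) := by
  set σ := Tuple.sort ξ with hσ
  have hmono : Monotone (ξ ∘ σ) := Tuple.monotone_sort ξ
  have hM0 : (0:ℝ) ≤ M := le_trans (hξ ⟨0, hn⟩) (hξM ⟨0, hn⟩)
  constructor
  · -- membership: z i j = 1 iff i = σ j, θ k = ξ (σ k)
    refine ⟨fun i j => if i = σ j then 1 else 0, fun k => ξ (σ k), ?_, ?_, ?_,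
      fun k => hξ (σ k), ?_, rfl⟩
    · intro i j; by_cases h : i = σ j <;> simp [h]
    · intro j
      rw [Finset.sum_eq_single (σ j)] <;> simp_all
    · intro i
      rw [Finset.sum_eq_single (σ.symm i)]
      · simp
      · intro j _ hj
        have : i ≠ σ j := fun h => hj (by simp [h])
        simp [this]
      · simp
    · intro i k
      by_cases h : σ.symm i ≤ k
      · have hsum : ∑ j ∈ Finset.univ.filter (fun j => j ≤ k),
            (if i = σ j then (1:ℝ) else 0) = 1 := by
          rw [Finset.sum_eq_single (σ.symm i)]
          · simp
          · intro j _ hj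
            have : i ≠ σ j := fun h' => hj (by simp [h'])
            simp [this]
          · simp [h]
        rw [hsum]
        have hle : ξ (σ (σ.symm i)) ≤ ξ (σ k) := hmono h
        simp only [Equiv.apply_symm_apply] at hle
        simpa using hle
      · have hsum : ∑ j ∈ Finset.univ.filter (fun j => j ≤ k),
            (if i = σ j then (1:ℝ) else 0) = 0 := by
          apply Finset.sum_eq_zero
          intro j hj
          simp only [Finset.mem_filter] at hj
          have : i ≠ σ j := by
            rintro rfl
            exact h (by simpa using hj.2)
          simp [this]
        rw [hsum]
        have := hξM i
        have := hξ (σ k)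
        nlinarith
  · -- lower bound
    rintro s ⟨z, θ, hz01, hcol, hrow, hθ0, hcon, rfl⟩
    apply Finset.sum_le_sum
    intro k _
    refine mul_le_mul_of_nonneg_left ?_ (hlam k)
    -- choose τ j : the unique row with z (τ j) j = 1
    have hex : ∀ j : Fin n, ∃ i, z i j = 1 := by
      intro j
      by_contra hc
      push_neg at hc
      have : ∑ i, z i j = 0 := Finset.sum_eq_zero fun i _ => by
        rcases hz01 i j with h | h
        · exact h
        · exact absurd h (hc i)
      rw [hcol j] at this; norm_num at this
    choose τ hτ using hex
    have hznn : ∀ i j, (0:ℝ) ≤ z i j := fun i j => by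
      rcases hz01 i j with h | h <;> rw [h] <;> norm_num
    have hτinj : Function.Injective τ := by
      intro j j' h
      by_contra hne
      have hsub : ({j, j'} : Finset (Fin n)) ⊆ Finset.univ := Finset.subset_univ _
      have h2 : ∑ j'' ∈ ({j, j'} : Finset (Fin n)), z (τ j) j'' ≤ ∑ j'', z (τ j) j'' :=
        Finset.sum_le_sum_of_subset_of_nonneg hsub (fun i _ _ => hznn _ i)
      rw [Finset.sum_pair hne, hτ j, hrow (τ j), h, hτ j'] at h2
      norm_num at h2
    -- θ k ≥ ξ (τ j) for all j ≤ k
    have hθτ : ∀ j : Fin n, j ≤ k → ξ (τ j) ≤ θ k := by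
      intro j hj
      have hS : (1:ℝ) ≤ ∑ j' ∈ Finset.univ.filter (fun j' => j' ≤ k), z (τ j) j' := by
        have := Finset.single_le_sum (f := fun j' => z (τ j) j')
          (fun i _ => hznn _ i) (by simp [hj] : j ∈ Finset.univ.filter (fun j' => j' ≤ k))
        simpa [hτ j] using this
      have := hcon (τ j) k
      nlinarith
    -- counting: ∃ j ≤ k with ξ (σ k) ≤ ξ (τ j)
    by_contra hc
    push_neg at hc
    have hall : ∀ j : Fin n, j ≤ k → ξ (τ j) < ξ (σ k) := by
      intro j hj
      by_contra hge
      push_neg at hge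
      exact absurd (le_trans hge (hθτ j hj)) (not_le.mpr hc)
    set A := (Finset.univ.filter (fun j : Fin n => j ≤ k)).image τ with hA
    set B := Finset.univ.filter (fun i : Fin n => ξ i < ξ (σ k)) with hB
    have hAB : A ⊆ B := by
      intro i hi
      simp only [hA, Finset.mem_image, Finset.mem_filter, Finset.mem_univ, true_and] at hi
      obtain ⟨j, hj, rfl⟩ := hi
      simp only [hB, Finset.mem_filter, Finset.mem_univ, true_and]
      exact hall j hj
    have hcardA : A.card = (k : ℕ) + 1 := by
      rw [hA, Finset.card_image_of_injective _ hτinj]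
      have : Finset.univ.filter (fun j : Fin n => j ≤ k) = Finset.Iic k := by
        ext j; simp
      rw [this, Fin.card_Iic]
    have hBsub : B ⊆ (Finset.univ.filter (fun j : Fin n => j < k)).image σ := by
      intro i hi
      simp only [hB, Finset.mem_filter, Finset.mem_univ, true_and] at hi
      simp only [Finset.mem_image, Finset.mem_filter, Finset.mem_univ, true_and]
      refine ⟨σ.symm i, ?_, by simp⟩
      by_contra hge
      push_neg at hge
      have : ξ (σ k) ≤ ξ (σ (σ.symm i)) := hmono hge
      simp only [Equiv.apply_symm_apply] at this
      exact absurd this (not_le.mpr hi)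
    have hcardB : B.card ≤ (k : ℕ) := by
      calc B.card ≤ ((Finset.univ.filter (fun j : Fin n => j < k)).image σ).card :=
            Finset.card_le_card hBsub
        _ ≤ (Finset.univ.filter (fun j : Fin n => j < k)).card := Finset.card_image_le
        _ = (k : ℕ) := by
            have : Finset.univ.filter (fun j : Fin n => j < k) = Finset.Iio k := by
              ext j; simp
            rw [this, Fin.card_Iio]
    have := Finset.card_le_card hAB
    omega
end

section
/- For any permutation σ of {1,...,n}, nonnegative ξ ∈ ℝⁿ, and nonnegative weights λ, the value ∑ₖ λₖ · max({0} ∪ {ξᵢ : σ(i) ≤ k}) is at least ∑ₖ λₖ ξ₍ₖ₎ when λ is non-decreasing; consequently, for non-decreasing λ the identity permutation on sorted data is optimal in the mixed-integer OWA formulation. -/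
/-- For any permutation σ and non-decreasing nonnegative weights,
∑ₖ λₖ · max({0} ∪ {ξᵢ : σ(i) ≤ k}) ≥ ∑ₖ λₖ ξ₍ₖ₎. -/
theorem owa_perm_lower_bound (n : ℕ) (hn : 1 ≤ n)
    (ξ lam : Fin n → ℝ) (hξ : ∀ i, 0 ≤ ξ i) (hlam0 : ∀ i, 0 ≤ lam i)
    (hlam : Monotone lam) (σ : Equiv.Perm (Fin n)) :
    ∑ k, lam k * (ξ ∘ Tuple.sort ξ) k ≤
      ∑ k, lam k *
        (insert (0 : ℝ) ((Finset.univ.filter fun i => σ i ≤ k).image ξ)).max'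
          (Finset.insert_nonempty _ _) := by
  refine Finset.sum_le_sum fun k _ => ?_
  refine mul_le_mul_of_nonneg_left ?_ (hlam0 k)
  -- S : indices with σ i ≤ k, card k+1
  set S := Finset.univ.filter fun i => σ i ≤ k with hS
  set T := (Finset.Ici k).image (Tuple.sort ξ) with hT
  have hScard : S.card = (k : ℕ) + 1 := by
    rw [hS]
    rw [show (Finset.univ.filter fun i => σ i ≤ k) = (Finset.Iic k).image σ.symm by
      ext i
      simp [Equiv.eq_symm_apply, eq_comm]]
    rw [Finset.card_image_of_injective _ σ.symm.injective, Fin.card_Iic]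
  have hTcard : T.card = n - (k : ℕ) := by
    rw [hT, Finset.card_image_of_injective _ (Tuple.sort ξ).injective, Fin.card_Ici]
  have hinter : (S ∩ T).Nonempty := by
    by_contra h
    rw [Finset.not_nonempty_iff_eq_empty] at h
    have := Finset.card_union_of_disjoint (Finset.disjoint_iff_inter_eq_empty.mpr h)
    have hle : (S ∪ T).card ≤ n := by
      simpa using Finset.card_le_card (Finset.subset_univ (S ∪ T))
    rw [this, hScard, hTcard] at hle
    omega
  obtain ⟨i, hi⟩ := hinter
  rw [Finset.mem_inter] at hi
  obtain ⟨hiS, hiT⟩ := hi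
  rw [hT, Finset.mem_image] at hiT
  obtain ⟨j, hj, rfl⟩ := hiT
  have h1 : (ξ ∘ Tuple.sort ξ) k ≤ ξ (Tuple.sort ξ j) :=
    Tuple.monotone_sort ξ (Finset.mem_Ici.mp hj)
  refine h1.trans (Finset.le_max' _ _ ?_)
  exact Finset.mem_insert_of_mem (Finset.mem_image_of_mem ξ hiS)
end

section
/- Weak duality for C-OWA-SVM: for any primal-feasible point (w, b, ξ, u, v) of the C-OWA-SVM problem and any dual-feasible (α, η) satisfying ∑ᵢ αᵢ yᵢ = 0, αᵢ ≤ ∑ⱼ η_{ij} C λⱼ, ∑ᵢ η_{ij} = 1 for all j, ∑ⱼ η_{ij} = 1 for all i, α ≥ 0, η ≥ 0, the primal objective (1/2)‖w‖² + ∑ᵢ uᵢ + ∑ⱼ vⱼ is at least the dual objective ∑ᵢ αᵢ − (1/2)∑ᵢ∑ⱼ αᵢαⱼyᵢyⱼ⟨xᵢ, xⱼ⟩. -/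
open scoped RealInnerProductSpace

/-- Weak duality for C-OWA-SVM: primal objective ≥ dual objective for
any pair of feasible points. -/
theorem cowasvm_weak_duality (n d : ℕ) (C : ℝ) (hC : 0 < C)
    (x : Fin n → EuclideanSpace ℝ (Fin d)) (y : Fin n → ℝ)
    (hy : ∀ i, y i = -1 ∨ y i = 1)
    (lam : Fin n → ℝ) (hlam : ∀ j, 0 ≤ lam j)
    -- primal feasible point
    (w : EuclideanSpace ℝ (Fin d)) (b : ℝ) (ξ u v : Fin n → ℝ)
    (hmargin : ∀ i, 1 - ξ i ≤ y i * (⟪w, x i⟫ + b))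
    (hξ : ∀ i, 0 ≤ ξ i)
    (huv : ∀ i j, C * lam j * ξ i ≤ u i + v j)
    -- dual feasible point
    (α : Fin n → ℝ) (η : Fin n → Fin n → ℝ)
    (hdual1 : ∑ i, α i * y i = 0)
    (hdual2 : ∀ i, α i ≤ ∑ j, η i j * (C * lam j))
    (hdual3 : ∀ j, ∑ i, η i j = 1)
    (hdual4 : ∀ i, ∑ j, η i j = 1)
    (hα : ∀ i, 0 ≤ α i) (hη : ∀ i j, 0 ≤ η i j) :
    (∑ i, α i) - (1 / 2) * ∑ i, ∑ j, α i * α j * y i * y j * ⟪x i, x j⟫ ≤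
      (1 / 2) * ‖w‖ ^ 2 + (∑ i, u i) + ∑ j, v j := by

  classical
  set z : EuclideanSpace ℝ (Fin d) := ∑ i, (α i * y i) • x i with hzdef
  have hz : ∑ i, ∑ j, α i * α j * y i * y j * ⟪x i, x j⟫ = ⟪z, z⟫ := by
    rw [hzdef, sum_inner]
    apply Finset.sum_congr rfl
    intro i _
    rw [inner_sum]
    apply Finset.sum_congr rfl
    intro j _
    rw [real_inner_smul_left, real_inner_smul_right]
    ring
  have hwz : ∑ i, (α i * y i) * ⟪w, x i⟫ = ⟪w, z⟫ := by
    rw [hzdef, inner_sum]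
    apply Finset.sum_congr rfl
    intro i _
    rw [real_inner_smul_right]
  -- step 1: ∑ α ξ ≤ ∑ u + ∑ v
  have h1 : ∑ i, α i * ξ i ≤ (∑ i, u i) + ∑ j, v j := by
    calc ∑ i, α i * ξ i ≤ ∑ i, (∑ j, η i j * (C * lam j)) * ξ i := by
          apply Finset.sum_le_sum
          intro i _
          exact mul_le_mul_of_nonneg_right (hdual2 i) (hξ i)
      _ = ∑ i, ∑ j, η i j * (C * lam j * ξ i) := by
          apply Finset.sum_congr rfl
          intro i _
          rw [Finset.sum_mul]
          apply Finset.sum_congr rfl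
          intro j _; ring
      _ ≤ ∑ i, ∑ j, η i j * (u i + v j) := by
          apply Finset.sum_le_sum; intro i _
          apply Finset.sum_le_sum; intro j _
          exact mul_le_mul_of_nonneg_left (huv i j) (hη i j)
      _ = (∑ i, u i) + ∑ j, v j := by
          have : ∑ i, ∑ j, η i j * (u i + v j)
              = (∑ i, (∑ j, η i j) * u i) + ∑ j, (∑ i, η i j) * v j := by
            have e1 : ∑ i, ∑ j, η i j * (u i + v j)
                = (∑ i, ∑ j, η i j * u i) + ∑ i, ∑ j, η i j * v j := by
              rw [← Finset.sum_add_distrib]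
              apply Finset.sum_congr rfl
              intro i _
              rw [← Finset.sum_add_distrib]
              apply Finset.sum_congr rfl
              intro j _; ring
            rw [e1]
            congr 1
            · exact Finset.sum_congr rfl fun i _ => (Finset.sum_mul _ _ _).symm
            · rw [Finset.sum_comm]
              exact Finset.sum_congr rfl fun j _ => (Finset.sum_mul _ _ _).symm
          rw [this]
          simp [hdual3, hdual4]
  -- step 2: ∑ α ≤ ⟪w,z⟫ + ∑ α ξ
  have h2 : ∑ i, α i ≤ ⟪w, z⟫ + ∑ i, α i * ξ i := by
    have : ∑ i, α i ≤ ∑ i, (α i * y i * ⟪w, x i⟫ + α i * y i * b + α i * ξ i) := by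
      apply Finset.sum_le_sum
      intro i _
      have h := hmargin i
      have := mul_le_mul_of_nonneg_left h (hα i)
      nlinarith [hα i]
    calc ∑ i, α i ≤ ∑ i, (α i * y i * ⟪w, x i⟫ + α i * y i * b + α i * ξ i) := this
      _ = (∑ i, (α i * y i) * ⟪w, x i⟫) + (∑ i, α i * y i) * b + ∑ i, α i * ξ i := by
          rw [Finset.sum_add_distrib, Finset.sum_add_distrib, Finset.sum_mul]
      _ = ⟪w, z⟫ + ∑ i, α i * ξ i := by rw [hwz, hdual1]; ring
  -- step 3: ⟪w,z⟫ - (1/2)⟪z,z⟫ ≤ (1/2)‖w‖²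
  have h3 : ⟪w, z⟫ - (1 / 2) * ⟪z, z⟫ ≤ (1 / 2) * ‖w‖ ^ 2 := by
    have hnn : (0:ℝ) ≤ ⟪w - z, w - z⟫ := real_inner_self_nonneg
    have hexp : ⟪w - z, w - z⟫ = ⟪w, w⟫ - 2 * ⟪w, z⟫ + ⟪z, z⟫ := by
      rw [inner_sub_left, inner_sub_right, inner_sub_right, real_inner_comm z w]
      ring
    have hww : ⟪w, w⟫ = ‖w‖ ^ 2 := real_inner_self_eq_norm_sq w
    nlinarith
  rw [hz]
  linarith
end

section
/- If (α*, η*) together with multipliers satisfy the KKT conditions of C-OWA-SVM and there exists an index k with 0 < α*ₖ < C ∑ⱼ η*_{kj} λⱼ, then ξ*ₖ = 0 and the offset satisfies b = (1 − yₖ ∑ᵢ α*ᵢ yᵢ ⟨xᵢ, xₖ⟩)/yₖ. -/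
open scoped RealInnerProductSpace

/-- If the KKT conditions of C-OWA-SVM hold and 0 < αₖ < C ∑ⱼ η_{kj} λⱼ for some k,
then ξₖ = 0 and b = (1 − yₖ ∑ᵢ αᵢ yᵢ ⟨xᵢ, xₖ⟩)/yₖ. -/
theorem cowasvm_offset (n d : ℕ) (C : ℝ) (hC : 0 < C)
    (x : Fin n → EuclideanSpace ℝ (Fin d)) (y : Fin n → ℝ)
    (hy : ∀ i, y i = -1 ∨ y i = 1)
    (lam : Fin n → ℝ) (hlam : ∀ j, 0 ≤ lam j)
    (w : EuclideanSpace ℝ (Fin d)) (b : ℝ) (ξ : Fin n → ℝ)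
    (α μ : Fin n → ℝ) (η : Fin n → Fin n → ℝ)
    (hα : ∀ i, 0 ≤ α i) (hμ : ∀ i, 0 ≤ μ i) (hη : ∀ i j, 0 ≤ η i j)
    -- stationarity
    (hstatw : w = ∑ i, (α i * y i) • x i)
    (hstatξ : ∀ i, -(α i) - μ i + ∑ j, η i j * (C * lam j) = 0)
    -- complementary slackness
    (hcs1 : ∀ i, α i * (1 - ξ i - y i * (⟪w, x i⟫ + b)) = 0)
    (hcs2 : ∀ i, μ i * ξ i = 0)
    -- primal feasibility
    (hmargin : ∀ i, 1 - ξ i ≤ y i * (⟪w, x i⟫ + b))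
    (hξ : ∀ i, 0 ≤ ξ i)
    (k : Fin n) (hk1 : 0 < α k) (hk2 : α k < C * ∑ j, η k j * lam j) :
    ξ k = 0 ∧ b = (1 - y k * ∑ i, α i * y i * ⟪x i, x k⟫) / y k := by
  have hsum : (∑ j, η k j * (C * lam j)) = C * ∑ j, η k j * lam j := by
    rw [Finset.mul_sum]; congr 1; ext j; ring
  have hμk : 0 < μ k := by
    have := hstatξ k
    rw [hsum] at this
    linarith
  have hξk : ξ k = 0 := by
    have := hcs2 k
    rcases mul_eq_zero.mp this with h | h
    · exact absurd h (ne_of_gt hμk)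
    · exact h
  refine ⟨hξk, ?_⟩
  have hyk : y k ≠ 0 := by rcases hy k with h | h <;> rw [h] <;> norm_num
  have h1 : 1 - ξ k - y k * (⟪w, x k⟫ + b) = 0 := by
    rcases mul_eq_zero.mp (hcs1 k) with h | h
    · exact absurd h (ne_of_gt hk1)
    · exact h
  have hw : ⟪w, x k⟫ = ∑ i, α i * y i * ⟪x i, x k⟫ := by
    rw [hstatw, sum_inner]
    congr 1; ext i
    rw [real_inner_smul_left]
  rw [hξk] at h1
  rw [hw] at h1
  rw [eq_div_iff hyk]
  linear_combination -h1
end
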